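/- arXiv:2212.13807 — 4 statements merged into one kernel-verified Lean document; each statement's English description precedes it below -/
import Mathlib

section
/- Let (X,r) be a non-degenerate involutive braided pair. Then for all i, j ∈ X one has σ_i ∘ σ_{σ_i^{-1}(j)} = σ_j ∘ σ_{σ_j^{-1}(i)} as bijections of X. -/
/-- Let `(X,r)` be a non-degenerate involutive braided pair.
Then for all `i, j ∈ X` one has `σ_i ∘ σ_{σ_i⁻¹(j)} = σ_j ∘ σ_{σ_j⁻¹(i)}`
as bijections of `X`. -/
theorem stmt_0 {X : Type*} [Nonempty X] (σ γ : X → Equiv.Perm X)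
    (r : X × X → X × X)
    (hr : ∀ x y : X, r (x, y) = (σ x y, γ y x))
    (hinv : r ∘ r = id)
    (r12 r23 : X × X × X → X × X × X)
    (h12 : ∀ x y z : X, r12 (x, y, z) = ((r (x, y)).1, (r (x, y)).2, z))
    (h23 : ∀ x y z : X, r23 (x, y, z) = (x, (r (y, z)).1, (r (y, z)).2))
    (hbraid : r12 ∘ r23 ∘ r12 = r23 ∘ r12 ∘ r23)
    (i j : X) :
    σ i * σ ((σ i).symm j) = σ j * σ ((σ j).symm i) := by
  -- Involutivity, first component: σ (σ x y) (γ y x) = x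
  have hI : ∀ x y : X, σ (σ x y) (γ y x) = x := by
    intro x y
    have := congrFun hinv (x, y)
    simp only [Function.comp_apply, id_eq, hr] at this
    exact congrArg Prod.fst this
  -- Braiding, first component: σ (σ x y) (σ (γ y x) z) = σ x (σ y z)
  have hB : ∀ x y z : X, σ (σ x y) (σ (γ y x) z) = σ x (σ y z) := by
    intro x y z
    have := congrFun hbraid (x, y, z)
    simp only [Function.comp_apply, h12, h23, hr] at this
    exact congrArg Prod.fst this
  ext z
  set y := (σ i).symm j with hy
  have hiy : σ i y = j := (σ i).apply_symm_apply j
  -- γ y i = (σ j)⁻¹ i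
  have hg : γ y i = (σ j).symm i := by
    have := hI i y
    rw [hiy] at this
    exact (((σ j).symm_apply_eq).mpr this.symm).symm
  have := hB i y z
  rw [hiy, hg] at this
  simpa using this.symm
end

section
/- Let (X,r) be a non-degenerate involutive pair and define D : X → X by D(x) = σ_x^{-1}(x). Suppose (X,r) is of class m, i.e., m ≥ 1 is the minimal natural number such that σ_x ∘ σ_{D(x)} ∘ σ_{D²(x)} ∘ ⋯ ∘ σ_{D^{m−1}(x)} = id_X for every x ∈ X. Then m is also the minimal natural number such that g_{(x,y)} ∘ g_{(D(x),D(y))} ∘ g_{(D²(x),D²(y))} ∘ ⋯ ∘ g_{(D^{m−1}(x),D^{m−1}(y))} = id_{X²} for every (x,y) ∈ X²; that is, the induced pair (X², r̃) is also of class m. -/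
/-- The composition `s_x ∘ s_{D(x)} ∘ s_{D²(x)} ∘ ⋯ ∘ s_{D^{m−1}(x)}` of `m`
permutations from a family `s` indexed along the `D`-orbit of `x`. -/
def iterProd {Y : Type*} (s : Y → Equiv.Perm Y) (D : Y → Y) : Y → ℕ → Equiv.Perm Y
  | _, 0 => 1
  | x, n + 1 => s x * iterProd s D (D x) n

/-- Let `(X,r)` be a non-degenerate involutive pair and define
`D(x) = σ_x⁻¹(x)`. If `(X,r)` is of class `m` (i.e. `m ≥ 1` is minimal with
`σ_x ∘ σ_{D(x)} ∘ ⋯ ∘ σ_{D^{m−1}(x)} = id` for all `x`), then `m` is also the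
minimal natural number with
`g_{(x,y)} ∘ g_{(D(x),D(y))} ∘ ⋯ ∘ g_{(D^{m−1}(x),D^{m−1}(y))} = id_{X²}` for
every `(x,y) ∈ X²`; that is, `(X², r̃)` is also of class `m`. -/
theorem stmt_10 {X : Type*} [Nonempty X] (σ γ : X → Equiv.Perm X)
    (r : X × X → X × X)
    (hr : ∀ x y : X, r (x, y) = (σ x y, γ y x))
    (hinv : r ∘ r = id)
    (D : X → X) (hD : ∀ x : X, D x = (σ x).symm x)
    (g : X × X → Equiv.Perm (X × X))
    (hg : ∀ i k j l : X, g (i, k) (j, l) = (σ i j, σ k l))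
    (m : ℕ) (hm : 1 ≤ m)
    (hclass : ∀ x : X, iterProd σ D x m = 1)
    (hmin : ∀ m' : ℕ, 1 ≤ m' → (∀ x : X, iterProd σ D x m' = 1) → m ≤ m') :
    (∀ p : X × X, iterProd g (fun q => (D q.1, D q.2)) p m = 1) ∧
    (∀ m' : ℕ, 1 ≤ m' →
      (∀ p : X × X, iterProd g (fun q => (D q.1, D q.2)) p m' = 1) → m ≤ m') := by

  have key : ∀ (n : ℕ) (x y j l : X),
      iterProd g (fun q => (D q.1, D q.2)) (x, y) n (j, l)
        = (iterProd σ D x n j, iterProd σ D y n l) := by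
    intro n
    induction n with
    | zero => intro x y j l; rfl
    | succ n ih =>
      intro x y j l
      show g (x, y) (iterProd g (fun q => (D q.1, D q.2)) (D x, D y) n (j, l)) = _
      rw [ih, hg]
      rfl
  constructor
  · rintro ⟨x, y⟩
    apply Equiv.ext
    rintro ⟨j, l⟩
    rw [key, hclass x, hclass y]
    rfl
  · intro m' hm' h
    apply hmin m' hm'
    intro x
    apply Equiv.ext
    intro j
    have := h (x, x)
    have h2 := congrArg (fun (e : Equiv.Perm (X × X)) => e (j, j)) this
    simp only [key] at h2
    exact congrArg Prod.fst h2
end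

section
/- Let X be a finite nonempty set with a distinguished element x₀, and let (X,r) be a non-degenerate pair. Regard each g_{(i,k)} as a permutation of X² and let G̃ be the subgroup of the symmetric group of X² generated by {g_{(i,k)} : i,k ∈ X}. Then the orbit of (x₀,x₀) under G̃ equals all of X² if and only if for every s, m ∈ X there exist ℓ ≥ 1 and elements i₁, …, i_ℓ, k₁, …, k_ℓ of X such that σ_{i₁} ∘ σ_{i₂} ∘ ⋯ ∘ σ_{i_ℓ}(x₀) = s and σ_{k₁} ∘ σ_{k₂} ∘ ⋯ ∘ σ_{k_ℓ}(x₀) = m. -/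
/-- Let `X` be a finite nonempty set with a distinguished
element `x₀` and `(X,r)` a non-degenerate pair. Regard each `g_{(i,k)}` as a
permutation of `X²` and let `G̃ ≤ Sym(X²)` be generated by all `g_{(i,k)}`.
Then the orbit of `(x₀,x₀)` under `G̃` equals all of `X²` iff for all
`s, m ∈ X` there exist `ℓ ≥ 1` and `i₁, …, i_ℓ, k₁, …, k_ℓ ∈ X` with
`σ_{i₁} ∘ ⋯ ∘ σ_{i_ℓ}(x₀) = s` and `σ_{k₁} ∘ ⋯ ∘ σ_{k_ℓ}(x₀) = m`. -/
theorem stmt_16 {X : Type*} [Finite X] [Nonempty X] (x₀ : X)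
    (σ γ : X → Equiv.Perm X)
    (g : X × X → Equiv.Perm (X × X))
    (hg : ∀ i k j l : X, g (i, k) (j, l) = (σ i j, σ k l)) :
    MulAction.orbit
        (Subgroup.closure (Set.range g) : Subgroup (Equiv.Perm (X × X)))
        (x₀, x₀) = Set.univ ↔
      ∀ s m : X, ∃ L : List (X × X), L ≠ [] ∧
        L.foldr (fun p a => σ p.1 a) x₀ = s ∧
        L.foldr (fun p a => σ p.2 a) x₀ = m := by
  classical
  obtain ⟨i0⟩ := ‹Nonempty X›
  -- action of a word on the base point
  have key : ∀ L : List (X × X), ((L.map g).prod) (x₀, x₀) =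
      (L.foldr (fun p a => σ p.1 a) x₀, L.foldr (fun p a => σ p.2 a) x₀) := by
    intro L
    induction L with
    | nil => simp
    | cons p L ih =>
      obtain ⟨i, k⟩ := p
      simp only [List.map_cons, List.prod_cons, List.foldr_cons,
        Equiv.Perm.mul_apply, ih]
      rw [show (L.foldr (fun p a => σ p.1 a) x₀, L.foldr (fun p a => σ p.2 a) x₀)
        = ((L.foldr (fun p a => σ p.1 a) x₀ : X), (L.foldr (fun p a => σ p.2 a) x₀ : X)) from rfl]
      exact hg i k _ _
  -- words are in the closure
  have memcl : ∀ L : List (X × X),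
      (L.map g).prod ∈ Subgroup.closure (Set.range g) := by
    intro L
    refine Subgroup.list_prod_mem _ ?_
    intro w hw
    obtain ⟨p, _, rfl⟩ := List.mem_map.mp hw
    exact Subgroup.subset_closure ⟨p, rfl⟩
  -- the set of words is closed under powers
  have Qpow : ∀ (L : List (X × X)) (n : ℕ), ∃ M : List (X × X),
      (M.map g).prod = (L.map g).prod ^ n := by
    intro L n
    refine ⟨(List.replicate n L).flatten, ?_⟩
    simp [List.map_flatten, List.prod_flatten, List.map_replicate, List.prod_replicate]
  -- every element of the closure is a word
  have Qall : ∀ w ∈ Subgroup.closure (Set.range g),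
      ∃ L : List (X × X), (L.map g).prod = w := by
    intro w hw
    refine Subgroup.closure_induction ?_ ?_ ?_ ?_ hw
    · rintro x ⟨p, rfl⟩
      exact ⟨[p], by simp⟩
    · exact ⟨[], by simp⟩
    · rintro x y _ _ ⟨L, rfl⟩ ⟨M, rfl⟩
      exact ⟨L ++ M, by simp⟩
    · rintro x _ ⟨L, rfl⟩
      obtain ⟨M, hM⟩ := Qpow L (orderOf (L.map g).prod - 1)
      refine ⟨M, ?_⟩
      rw [hM]
      have h1 : (L.map g).prod ^ orderOf (L.map g).prod = 1 := pow_orderOf_eq_one _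
      have hpos : 0 < orderOf (L.map g).prod := orderOf_pos _
      refine eq_inv_of_mul_eq_one_right ?_
      rw [← pow_succ', Nat.sub_add_cancel hpos]
      exact h1
  -- words can be made nonempty
  have Qne : ∀ L : List (X × X), ∃ M : List (X × X), M ≠ [] ∧
      (M.map g).prod = (L.map g).prod := by
    intro L
    have hpos : 0 < orderOf (g (i0, i0)) := orderOf_pos _
    set M : List (X × X) := List.replicate (orderOf (g (i0, i0))) (i0, i0) with hMdef
    have hM : (M.map g).prod = 1 := by
      rw [hMdef, List.map_replicate, List.prod_replicate, pow_orderOf_eq_one]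
    refine ⟨L ++ M, ?_, ?_⟩
    · intro h
      have hMnil : M = [] := (List.append_eq_nil_iff.mp h).2
      have : M.length = 0 := by rw [hMnil]; rfl
      rw [hMdef, List.length_replicate] at this
      omega
    · simp [hM]
  constructor
  · intro horb s m
    have hmem : ((s, m) : X × X) ∈ MulAction.orbit
        (Subgroup.closure (Set.range g) : Subgroup (Equiv.Perm (X × X))) (x₀, x₀) := by
      rw [horb]; trivial
    obtain ⟨⟨w, hw⟩, hws⟩ := hmem
    obtain ⟨L, hL⟩ := Qall w hw
    obtain ⟨M, hMne, hMeq⟩ := Qne L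
    refine ⟨M, hMne, ?_⟩
    have : ((M.map g).prod) (x₀, x₀) = (s, m) := by
      rw [hMeq, hL]; exact hws
    rw [key M] at this
    exact ⟨congrArg Prod.fst this, congrArg Prod.snd this⟩
  · intro h
    ext ⟨s, m⟩
    simp only [Set.mem_univ, iff_true]
    obtain ⟨L, _, h1, h2⟩ := h s m
    refine ⟨⟨(L.map g).prod, memcl L⟩, ?_⟩
    show ((L.map g).prod) (x₀, x₀) = (s, m)
    rw [key L, h1, h2]
end

section
/- Let X be a nonempty set with a distinguished element x₀, and let (X,r) be a non-degenerate pair satisfying condition (𝔠): there exists ℓ ≥ 1 such that for every s ∈ X there exist i₁, …, i_ℓ ∈ X with σ_{i₁} ∘ σ_{i₂} ∘ ⋯ ∘ σ_{i_ℓ}(x₀) = s. Then the induced pair (X², r̃) satisfies condition (𝔠) with the same ℓ and base point (x₀,x₀): for every (s,m) ∈ X² there exist (i₁,k₁), …, (i_ℓ,k_ℓ) ∈ X² with g_{(i₁,k₁)} ∘ g_{(i₂,k₂)} ∘ ⋯ ∘ g_{(i_ℓ,k_ℓ)}(x₀,x₀) = (s,m); in particular every element of X² lies in the orbit of (x₀,x₀)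 under the maps g. -/
private lemma zip_fold {X : Type*} (x₀ : X) (σ : X → Equiv.Perm X)
    (g : X × X → X × X → X × X)
    (hg : ∀ i k j l : X, g (i, k) (j, l) = (σ i j, σ k l)) :
    ∀ (L1 L2 : List X), L1.length = L2.length →
      (L1.zip L2).foldr (fun p a => g p a) (x₀, x₀) =
        (L1.foldr (fun i a => σ i a) x₀, L2.foldr (fun i a => σ i a) x₀) := by
  intro L1
  induction L1 with
  | nil => intro L2 h; simp [(List.length_eq_zero_iff.mp h.symm)]
  | cons a t ih =>
    intro L2 h
    cases L2 with
    | nil => simp at h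
    | cons b t2 =>
      simp only [List.zip_cons_cons, List.foldr_cons]
      rw [ih t2 (by simpa using h)]
      exact hg a b _ _

/-- Let `X` be nonempty with distinguished element `x₀`, and
`(X,r)` a non-degenerate pair satisfying condition (𝔠): there exists `ℓ ≥ 1`
such that every `s ∈ X` is reached from `x₀` by a composition of exactly `ℓ`
of the `σ`'s. Then `(X², r̃)` satisfies condition (𝔠) with the same `ℓ` and
base point `(x₀,x₀)`: every `(s,m) ∈ X²` is reached from `(x₀,x₀)` by a
composition of exactly `ℓ` of the maps `g`. -/
theorem stmt_17 {X : Type*} [Nonempty X] (x₀ : X)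
    (σ γ : X → Equiv.Perm X)
    (g : X × X → X × X → X × X)
    (hg : ∀ i k j l : X, g (i, k) (j, l) = (σ i j, σ k l))
    (ℓ : ℕ) (hℓ : 1 ≤ ℓ)
    (hC : ∀ s : X, ∃ L : List X, L.length = ℓ ∧
      L.foldr (fun i a => σ i a) x₀ = s) :
    ∀ s m : X, ∃ L : List (X × X), L.length = ℓ ∧
      L.foldr (fun p a => g p a) (x₀, x₀) = (s, m) := by
  intro s m
  obtain ⟨L1, h1, e1⟩ := hC s
  obtain ⟨L2, h2, e2⟩ := hC m
  refine ⟨L1.zip L2, ?_, ?_⟩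
  · rw [List.length_zip, h1, h2, min_self]
  · rw [zip_fold x₀ σ g hg L1 L2 (h1.trans h2.symm), e1, e2]
end
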